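/- arXiv:1710.05690 — 2 statements merged into one kernel-verified Lean document; each statement's English description precedes it below -/
import Mathlib

section
/- On the (m+1)-dimensional irreducible U_q(sl2)-module, the operator π(s) satisfying (on each weight vector) the eigenvalue formula of the shifted extremal projector is invertible for every complex s such that q^{2s} lies in −q^{Q} (i.e. q^{2s} = −q^{r} for some rational r making all factors nonzero); equivalently, none of the eigenvalues q^{n μ + n(n+1)} \prod_{i=1}^{n} [-s+μ+i]_q/[-s-i]_q vanishes, where μ ranges over the integer weights of the module. -/
open Finset

noncomputable section

/-- `(u - u⁻¹)/(q - q⁻¹)`; with `u = q^z` this is the q-number `[z]_q`. -/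
def qNum (q u : ℂ) : ℂ := (u - u⁻¹) / (q - q⁻¹)

lemma zpow_ne_one_aux (q : ℂ) (hq0 : q ≠ 0) (hq : ∀ n : ℕ, 0 < n → q ^ n ≠ 1) :
    ∀ z : ℤ, z ≠ 0 → q ^ z ≠ 1 := by
  intro z hz h
  have hn : q ^ (z.natAbs : ℤ) = 1 := by
    rcases Int.natAbs_eq z with h1 | h1
    · rw [← h1]; exact h
    · rw [show (z.natAbs : ℤ) = -z by omega, zpow_neg, h, inv_one]
  rw [zpow_natCast] at hn
  exact hq z.natAbs (by omega) hn

lemma key_ne (q t : ℂ) (hq0 : q ≠ 0) (hq : ∀ n : ℕ, 0 < n → q ^ n ≠ 1)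
    (hs : ∃ (a : ℤ) (b : ℕ), Odd b ∧ t ^ (2 * b) = -q ^ a) :
    ∀ k : ℤ, t ^ 2 ≠ q ^ (2 * k) := by
  obtain ⟨a, b, hb, hab⟩ := hs
  intro k hk
  have h1 : t ^ (2 * b) = q ^ (2 * k * b) := by
    rw [pow_mul, hk, ← zpow_natCast (q ^ (2*k)), ← zpow_mul]
  rw [hab] at h1
  have h2 : q ^ (2 * k * b - a) = -1 := by
    rw [zpow_sub₀ hq0, ← h1, neg_div, div_self (zpow_ne_zero a hq0)]
  have h3 : q ^ (2 * (2 * k * b - a)) = 1 := by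
    rw [mul_comm, zpow_mul]
    norm_num [h2]
  rcases eq_or_ne (2 * k * b - a) 0 with h4 | h4
  · rw [h4] at h2; norm_num at h2
  · exact zpow_ne_one_aux q hq0 hq _ (by omega) h3

lemma qNum_ne_zero (q u : ℂ) (hq0 : q ≠ 0) (hq2 : q ^ 2 ≠ 1) (hu0 : u ≠ 0)
    (hu2 : u ^ 2 ≠ 1) : qNum q u ≠ 0 := by
  apply div_ne_zero
  · intro h
    apply hu2
    have h1 : u = u⁻¹ := by linear_combination h
    calc u ^ 2 = u * u⁻¹ := by rw [sq, ← h1]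
      _ = 1 := mul_inv_cancel₀ hu0
  · intro h
    apply hq2
    have h1 : q = q⁻¹ := by linear_combination h
    calc q ^ 2 = q * q⁻¹ := by rw [sq, ← h1]
      _ = 1 := mul_inv_cancel₀ hq0

/-- on the `(m+1)`-dimensional irreducible `U_q(sl2)`-module the shifted
extremal projector `π(s)` acts on the weight-`μ` basis vector `v_j` (`μ = m - 2j`) by the
scalar `q^{jμ+j(j+1)} ∏_{i=1}^{j} [-s+μ+i]_q/[-s-i]_q` (with `t = q^s`).  If
`q^{2s} ∈ -q^{ℚ}` — encoded as `t^{2b} = -q^a` for some integer `a` and odd natural `b`,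
i.e. `q^{2s} = -q^{a/b}` — then none of these eigenvalues vanishes, i.e. `π(s)` is
invertible on the module. -/
theorem shifted_projector_invertible (q t : ℂ) (hq0 : q ≠ 0)
    (hq : ∀ n : ℕ, 0 < n → q ^ n ≠ 1) (ht : t ≠ 0)
    (hs : ∃ (a : ℤ) (b : ℕ), Odd b ∧ t ^ (2 * b) = -q ^ a)
    (m : ℕ) :
    ∀ j : ℕ, j ≤ m →
      q ^ ((j : ℤ) * ((m : ℤ) - 2 * j) + (j : ℤ) * ((j : ℤ) + 1)) *
          ∏ i ∈ range j,
            (qNum q (t⁻¹ * q ^ ((m : ℤ) - 2 * j + i + 1)) /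
              qNum q (t⁻¹ * q ^ (-(i : ℤ) - 1))) ≠ 0 := by
  intro j hj
  have hq2 : q ^ 2 ≠ 1 := hq 2 (by norm_num)
  have key := key_ne q t hq0 hq hs
  have main : ∀ k : ℤ, (t⁻¹ * q ^ k) ^ 2 ≠ 1 := by
    intro k h
    apply key k
    have h2 : (t ^ 2)⁻¹ * q ^ (2 * k) = 1 := by
      rw [← h, mul_pow, inv_pow]
      congr 1
      rw [mul_comm, zpow_mul, zpow_two, sq]
    have ht2 : t ^ 2 ≠ 0 := pow_ne_zero _ ht
    field_simp at h2
    exact h2.symm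
  apply mul_ne_zero (zpow_ne_zero _ hq0)
  rw [Finset.prod_ne_zero_iff]
  intro i _
  have hu : ∀ k : ℤ, t⁻¹ * q ^ k ≠ 0 := fun k =>
    mul_ne_zero (inv_ne_zero ht) (zpow_ne_zero _ hq0)
  exact div_ne_zero (qNum_ne_zero q _ hq0 hq2 (hu _) (main _))
    (qNum_ne_zero q _ hq0 hq2 (hu _) (main _))
end
end

section
/- In U_q(sl2), for the shifted extremal projector π(s) = \sum_{k=0}^{∞} f^k e^k π^k(s) with π^k(s) = (-1)^k q^{k(s-h-1)} / ([k]_q! \prod_{i=1}^{k}[s+i]_q), the intertwining relation e·π(s) = π(s+1) · (q^{-h}[s+1-h]_q/[s+1]_q) · e holds as an identity of operators on every highest weight module for which all coefficients are defined. -/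
open Finset

noncomputable section

/-- q-factorial `[k]_q!`. -/
def qFact (q : ℂ) (k : ℕ) : ℂ := ∏ i ∈ Finset.range k, qNum q (q ^ (i + 1))

/-!
Write `π(s) v = ∑ₖ cₖ Fᵏ Eᵏ v` for a vector `v` of weight `m` (so `κ = q^m`, and `t = q^s`).
Moving `E` past `Fᵏ⁺¹` on `Eᵏ⁺¹ v`, which has weight `m + 2k + 2`, produces the correction
`[k+1][m+k+2] Fᵏ Eᵏ⁺¹ v`, so `E π(s) v = ∑ₖ (cₖ + cₖ₊₁ [k+1][m+k+2]) Fᵏ Eᵏ⁺¹ v`, the top term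
vanishing because `Eᴺ⁺¹ v = 0`. The q-number identity `[a] - q^(a-b) [b] = q^(-b) [a-b]`
(with `a = s+k+1`, `b = m+k+2`) turns each of these coefficients into the `k`-th coefficient of
`π(s+1)` at the weight `m + 2` of `E v`, times `q^(-m-2) [s-m-1] / [s+1]`.
-/

lemma zpow_natCast_add_one {G : Type*} [DivInvMonoid G] (a : G) (i : ℕ) :
    a ^ ((i : ℤ) + 1) = a ^ (i + 1) := by
  exact_mod_cast zpow_natCast a (i + 1)

lemma sum_range_succ_smul_of_eq_add_smul {R M : Type*} [Semiring R] [AddCommMonoid M] [Module R M]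
    (c g : ℕ → R) (A B : ℕ → M) (h0 : A 0 = B 0) (hsucc : ∀ j, A (j + 1) = B (j + 1) + g j • B j)
    (N : ℕ) :
    ∑ k ∈ range (N + 1), c k • A k =
      ∑ k ∈ range N, (c k + c (k + 1) * g k) • B k + c N • B N := by
  induction N with
  | zero => simp [h0]
  | succ N ih =>
    rw [sum_range_succ, ih, hsucc, sum_range_succ, smul_add, add_smul, mul_smul]
    abel

lemma sub_inv_ne_zero_of_sq_ne_one {u : ℂ} (hu0 : u ≠ 0) (hu : u ^ 2 ≠ 1) : u - u⁻¹ ≠ 0 := by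
  intro h
  apply hu
  field_simp at h
  linear_combination h

lemma qNum_self {q : ℂ} (hq0 : q ≠ 0) (hq : q ^ 2 ≠ 1) : qNum q q = 1 :=
  div_self (sub_inv_ne_zero_of_sq_ne_one hq0 hq)

lemma qNum_pow_ne_zero {q : ℂ} (hq0 : q ≠ 0) (hq : ∀ n : ℕ, 0 < n → q ^ n ≠ 1) {n : ℕ}
    (hn : 0 < n) : qNum q (q ^ n) ≠ 0 := by
  refine div_ne_zero (sub_inv_ne_zero_of_sq_ne_one (pow_ne_zero n hq0) ?_)
    (sub_inv_ne_zero_of_sq_ne_one hq0 (hq 2 two_pos))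
  rw [← pow_mul]
  exact hq _ (by positivity)

lemma qNum_mul_qNum {q x y : ℂ} (hq0 : q ≠ 0) (hx : x ≠ 0) (hy : y ≠ 0) :
    qNum q (x * q) * qNum q y = qNum q (x * y) + qNum q x * qNum q (y * q⁻¹) := by
  rcases eq_or_ne (q - q⁻¹) 0 with hd | hd
  · simp [qNum, hd]
  · simp only [qNum]
    field_simp
    ring

lemma qNum_sub_div_mul_qNum (q x : ℂ) {y : ℂ} (hy : y ≠ 0) :
    qNum q x - x / y * qNum q y = y⁻¹ * qNum q (x / y) := by
  simp only [qNum]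
  field_simp
  ring

/-- The coefficient `π^k(s)` of `Fᵏ Eᵏ` evaluated at a weight vector of `K`-eigenvalue
`κ = q^h`, with `t = q^s`: `q^(k(s-h-1)) = (t (q κ)⁻¹)^k` and `[s+i]_q = qNum q (t q^i)`. -/
def projCoeff (q t κ : ℂ) (k : ℕ) : ℂ :=
  (-1) ^ k * (t * (q * κ)⁻¹) ^ k / (qFact q k * ∏ i ∈ range k, qNum q (t * q ^ ((i : ℤ) + 1)))

lemma projCoeff_succ (q t κ : ℂ) (k : ℕ) :
    projCoeff q t κ (k + 1) = -(projCoeff q t κ k * (t * (q * κ)⁻¹)) /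
      (qNum q (q ^ (k + 1)) * qNum q (t * q ^ (k + 1))) := by
  simp only [projCoeff, qFact, prod_range_succ, zpow_natCast_add_one]
  ring

lemma prod_qNum_shift (q t : ℂ) (k : ℕ) :
    (∏ i ∈ range k, qNum q (t * q * q ^ ((i : ℤ) + 1))) * qNum q (t * q) =
      (∏ i ∈ range k, qNum q (t * q ^ ((i : ℤ) + 1))) * qNum q (t * q ^ (k + 1)) := by
  simp only [zpow_natCast_add_one]
  rw [← prod_range_succ (fun i => qNum q (t * q ^ (i + 1))), prod_range_succ']
  simp only [zero_add, pow_one, pow_succ _ (_ + 1), mul_assoc, mul_comm q]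

lemma projCoeff_shift {q : ℂ} (hq0 : q ≠ 0) (t κ : ℂ) (k : ℕ) (ht : qNum q (t * q) ≠ 0) :
    projCoeff q (t * q) (κ * q ^ 2) k =
      projCoeff q t κ k * (q ^ k)⁻¹ * qNum q (t * q) / qNum q (t * q ^ (k + 1)) := by
  have hbase : t * q * (q * (κ * q ^ 2))⁻¹ = t * (q * κ)⁻¹ * q⁻¹ := by
    field_simp
  set c := (-1) ^ k * (t * (q * κ)⁻¹) ^ k * (q ^ k)⁻¹
  calc projCoeff q (t * q) (κ * q ^ 2) k
      = c * qNum q (t * q) /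
          (qFact q k * ((∏ i ∈ range k, qNum q (t * q * q ^ ((i : ℤ) + 1))) * qNum q (t * q))) := by
        rw [projCoeff, hbase, mul_pow, inv_pow, ← mul_assoc, ← mul_assoc, mul_div_mul_right _ _ ht]
    _ = _ := by
        rw [prod_qNum_shift, projCoeff]
        ring

lemma projCoeff_add_projCoeff_succ_mul {q : ℂ} (hq0 : q ≠ 0) {t κ : ℂ} (hκ : κ ≠ 0) {k : ℕ}
    (hk : qNum q (q ^ (k + 1)) ≠ 0) (htk : qNum q (t * q ^ (k + 1)) ≠ 0)
    (ht : qNum q (t * q) ≠ 0) :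
    projCoeff q t κ k + projCoeff q t κ (k + 1) * (qNum q (q ^ (k + 1)) * qNum q (κ * q ^ (k + 2)))
      = projCoeff q (t * q) (κ * q ^ 2) k *
          ((κ * q ^ 2)⁻¹ * qNum q (t * q * (κ * q ^ 2)⁻¹) / qNum q (t * q)) := by
  rw [projCoeff_succ, projCoeff_shift hq0 t κ k ht]
  set c := projCoeff q t κ k
  set x := t * q ^ (k + 1)
  set y := κ * q ^ (k + 2)
  have hy : y ≠ 0 := mul_ne_zero hκ (pow_ne_zero _ hq0)
  have hxy : t * (q * κ)⁻¹ = x / y := by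
    simp only [x, y]
    field_simp
    ring
  have hxy' : t * q * (κ * q ^ 2)⁻¹ = x / y := by
    simp only [x, y]
    field_simp
    ring
  have hy' : (q ^ k)⁻¹ * (κ * q ^ 2)⁻¹ = y⁻¹ := by
    simp only [y]
    field_simp
    ring
  rw [hxy, hxy']
  clear_value x y
  generalize qNum q (t * q) = w at ht ⊢
  calc c + -(c * (x / y)) / (qNum q (q ^ (k + 1)) * qNum q x) * (qNum q (q ^ (k + 1)) * qNum q y)
      = c * (qNum q x - x / y * qNum q y) / qNum q x := by
        field_simp
        ring
    _ = c * ((q ^ k)⁻¹ * (κ * q ^ 2)⁻¹ * qNum q (x / y)) / qNum q x := by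
        rw [qNum_sub_div_mul_qNum q x hy, hy']
    _ = _ := by
        field_simp

section Weights

variable {V : Type*} [AddCommGroup V] [Module ℂ V] {q : ℂ} {E F K Ki : Module.End ℂ V}

lemma apply_E_of_weight (hKE : K * E = (q ^ 2) • (E * K)) {w : V} {μ : ℂ} (hw : K w = μ • w) :
    K (E w) = (q ^ 2 * μ) • E w := by
  rw [← Module.End.mul_apply, hKE, LinearMap.smul_apply, Module.End.mul_apply, hw, map_smul,
    smul_smul]

lemma apply_F_of_weight (hKF : K * F = (q ^ 2)⁻¹ • (F * K)) {w : V} {μ : ℂ} (hw : K w = μ • w) :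
    K (F w) = (μ / q ^ 2) • F w := by
  rw [← Module.End.mul_apply, hKF, LinearMap.smul_apply, Module.End.mul_apply, hw, map_smul,
    smul_smul, div_eq_inv_mul]

lemma apply_E_pow_of_weight (hKE : K * E = (q ^ 2) • (E * K)) {v : V} {κ : ℂ}
    (hv : K v = κ • v) (k : ℕ) : K ((E ^ k) v) = (κ * q ^ (2 * k)) • (E ^ k) v := by
  induction k with
  | zero => simpa using hv
  | succ k ih =>
    rw [pow_succ', Module.End.mul_apply, apply_E_of_weight hKE ih]
    ring_nf

lemma E_F_apply_of_weight (hKi : Ki * K = 1) (hEF : E * F - F * E = (q - q⁻¹)⁻¹ • (K - Ki))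
    {w : V} {μ : ℂ} (hμ : μ ≠ 0) (hw : K w = μ • w) :
    E (F w) = F (E w) + qNum q μ • w := by
  have hKiw : Ki w = μ⁻¹ • w := by
    rw [eq_inv_smul_iff₀ hμ, ← map_smul, ← hw, ← Module.End.mul_apply, hKi, Module.End.one_apply]
  have h := congrArg (· w) hEF
  simp only [LinearMap.sub_apply, Module.End.mul_apply, LinearMap.smul_apply] at h
  rw [← sub_eq_iff_eq_add', h, hw, hKiw, qNum, div_eq_inv_mul, mul_smul, sub_smul]

lemma E_F_pow_succ_apply_of_weight (hq0 : q ≠ 0) (hq : q ^ 2 ≠ 1) (hKi : Ki * K = 1)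
    (hKF : K * F = (q ^ 2)⁻¹ • (F * K)) (hEF : E * F - F * E = (q - q⁻¹)⁻¹ • (K - Ki)) (k : ℕ) :
    ∀ {w : V} {μ : ℂ}, μ ≠ 0 → K w = μ • w →
      E ((F ^ (k + 1)) w) =
        (F ^ (k + 1)) (E w) + (qNum q (q ^ (k + 1)) * qNum q (μ / q ^ k)) • (F ^ k) w := by
  induction k with
  | zero =>
    intro w μ hμ hw
    simpa [qNum_self hq0 hq] using E_F_apply_of_weight hKi hEF hμ hw
  | succ k ih =>
    intro w μ hμ hw
    have hcoeff : qNum q (q ^ (k + 2)) * qNum q (μ / q ^ (k + 1)) =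
        qNum q μ + qNum q (q ^ (k + 1)) * qNum q (μ / q ^ 2 / q ^ k) := by
      convert qNum_mul_qNum hq0 (pow_ne_zero (k + 1) hq0)
        (div_ne_zero hμ (pow_ne_zero (k + 1) hq0)) using 3
      · ring
      · field_simp
      · congr 1
        field_simp
        ring
    have hpow : ∀ n (x : V), (F ^ (n + 1)) x = (F ^ n) (F x) := fun n x => by
      rw [pow_succ, Module.End.mul_apply]
    rw [hpow (k + 1) w, ih (div_ne_zero hμ (pow_ne_zero 2 hq0)) (apply_F_of_weight hKF hw),
      E_F_apply_of_weight hKi hEF hμ hw, map_add, map_smul, ← hpow (k + 1) (E w), ← hpow k w,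
      add_assoc, ← add_smul, hcoeff]

lemma E_F_pow_succ_E_pow_succ_apply (hq0 : q ≠ 0) (hq : q ^ 2 ≠ 1) (hKi : Ki * K = 1)
    (hKE : K * E = (q ^ 2) • (E * K)) (hKF : K * F = (q ^ 2)⁻¹ • (F * K))
    (hEF : E * F - F * E = (q - q⁻¹)⁻¹ • (K - Ki)) {v : V} {κ : ℂ} (hκ : κ ≠ 0)
    (hv : K v = κ • v) (j : ℕ) :
    E ((F ^ (j + 1)) ((E ^ (j + 1)) v)) = (F ^ (j + 1)) ((E ^ (j + 2)) v) +
      (qNum q (q ^ (j + 1)) * qNum q (κ * q ^ (j + 2))) • (F ^ j) ((E ^ (j + 1)) v) := by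
  have hweight : κ * q ^ (2 * (j + 1)) / q ^ j = κ * q ^ (j + 2) := by
    field_simp
    ring
  rw [E_F_pow_succ_apply_of_weight hq0 hq hKi hKF hEF j
    (mul_ne_zero hκ (pow_ne_zero _ hq0)) (apply_E_pow_of_weight hKE hv (j + 1)), hweight,
    ← Module.End.mul_apply E, ← pow_succ']

end Weights

theorem e_intertwining_relation_general {V : Type*} [AddCommGroup V] [Module ℂ V]
    (q t κ : ℂ) (hq0 : q ≠ 0) (hq : ∀ n : ℕ, 0 < n → q ^ n ≠ 1) (hκ : κ ≠ 0)
    (E F K Ki : Module.End ℂ V)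
    (hKi : Ki * K = 1)
    (hKE : K * E = (q ^ 2) • (E * K)) (hKF : K * F = (q ^ 2)⁻¹ • (F * K))
    (hEF : E * F - F * E = (q - q⁻¹)⁻¹ • (K - Ki))
    (v : V) (hKv : K v = κ • v) (N : ℕ) (hnil : (E ^ (N + 1)) v = 0)
    (hden : ∀ i : ℕ, 1 ≤ i → i ≤ N + 1 → qNum q (t * q ^ (i : ℤ)) ≠ 0) :
    E (∑ k ∈ range (N + 1),
        ((-1 : ℂ) ^ k * (t * (q * κ)⁻¹) ^ k /
            (qFact q k * ∏ i ∈ range k, qNum q (t * q ^ ((i : ℤ) + 1)))) •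
          (F ^ k) ((E ^ k) v))
      = ∑ k ∈ range (N + 1),
          ((-1 : ℂ) ^ k * (t * q * (q * (κ * q ^ 2))⁻¹) ^ k /
              (qFact q k * ∏ i ∈ range k, qNum q (t * q * q ^ ((i : ℤ) + 1)))) •
            (F ^ k) ((E ^ k)
              (((κ * q ^ 2)⁻¹ * qNum q (t * q * (κ * q ^ 2)⁻¹) / qNum q (t * q)) • E v)) := by
  set σ : ℂ := (κ * q ^ 2)⁻¹ * qNum q (t * q * (κ * q ^ 2)⁻¹) / qNum q (t * q)
  have hq2 : q ^ 2 ≠ 1 := hq 2 two_pos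
  have hE_succ : ∀ k (x : V), (E ^ k) (E x) = (E ^ (k + 1)) x := fun k x => by
    rw [pow_succ, Module.End.mul_apply]
  have hden' : ∀ i ≤ N, qNum q (t * q ^ (i + 1)) ≠ 0 := fun i hi => by
    simpa only [zpow_natCast] using hden (i + 1) (by omega) (by omega)
  have hlast : (F ^ N) ((E ^ (N + 1)) v) = 0 := by rw [hnil, map_zero]
  calc _ = ∑ k ∈ range (N + 1), projCoeff q t κ k • E ((F ^ k) ((E ^ k) v)) := by
        simp only [map_sum, map_smul, projCoeff]
    _ = ∑ k ∈ range N, (projCoeff q t κ k + projCoeff q t κ (k + 1) *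
          (qNum q (q ^ (k + 1)) * qNum q (κ * q ^ (k + 2)))) • (F ^ k) ((E ^ (k + 1)) v) := by
        rw [sum_range_succ_smul_of_eq_add_smul _ _ _ (fun k => (F ^ k) ((E ^ (k + 1)) v))
          (by simp) (E_F_pow_succ_E_pow_succ_apply hq0 hq2 hKi hKE hKF hEF hκ hKv), hlast,
          smul_zero, add_zero]
    _ = ∑ k ∈ range N, (projCoeff q (t * q) (κ * q ^ 2) k * σ) • (F ^ k) ((E ^ (k + 1)) v) := by
        refine sum_congr rfl fun k hk => ?_
        rw [projCoeff_add_projCoeff_succ_mul hq0 hκ (qNum_pow_ne_zero hq0 hq k.succ_pos)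
          (hden' k (mem_range.mp hk).le) (by simpa using hden' 0 N.zero_le)]
    _ = ∑ k ∈ range (N + 1),
          (projCoeff q (t * q) (κ * q ^ 2) k * σ) • (F ^ k) ((E ^ (k + 1)) v) := by
        rw [sum_range_succ, hlast, smul_zero, add_zero]
    _ = _ := by
        simp only [map_smul, smul_smul, hE_succ, projCoeff]

/-- the intertwining relation `e·π(s) = π(s+1)·(q^{-h}[s+1-h]_q/[s+1]_q)·e`
for the shifted extremal projector, as operators on a highest weight `U_q(sl2)`-module,
evaluated on a weight vector `v` with `K v = κ • v` (the `h`-dependent scalars are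
evaluated on the weights; `t = q^s`, and `E v` has `K`-eigenvalue `κ q²`). -/
theorem e_intertwining_relation {V : Type*} [AddCommGroup V] [Module ℂ V]
    (q t κ : ℂ) (hq0 : q ≠ 0) (hq : ∀ n : ℕ, 0 < n → q ^ n ≠ 1) (ht : t ≠ 0) (hκ : κ ≠ 0)
    (E F K Ki : Module.End ℂ V)
    (hK : K * Ki = 1) (hKi : Ki * K = 1)
    (hKE : K * E = (q ^ 2) • (E * K)) (hKF : K * F = (q ^ 2)⁻¹ • (F * K))
    (hEF : E * F - F * E = (q - q⁻¹)⁻¹ • (K - Ki))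
    (v : V) (hKv : K v = κ • v) (N : ℕ) (hnil : (E ^ (N + 1)) v = 0)
    (hden : ∀ i : ℕ, 1 ≤ i → i ≤ N + 1 → qNum q (t * q ^ (i : ℤ)) ≠ 0) :
    E (∑ k ∈ range (N + 1),
        ((-1 : ℂ) ^ k * (t * (q * κ)⁻¹) ^ k /
            (qFact q k * ∏ i ∈ range k, qNum q (t * q ^ ((i : ℤ) + 1)))) •
          (F ^ k) ((E ^ k) v))
      = ∑ k ∈ range (N + 1),
          ((-1 : ℂ) ^ k * (t * q * (q * (κ * q ^ 2))⁻¹) ^ k /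
              (qFact q k * ∏ i ∈ range k, qNum q (t * q * q ^ ((i : ℤ) + 1)))) •
            (F ^ k) ((E ^ k)
              (((κ * q ^ 2)⁻¹ * qNum q (t * q * (κ * q ^ 2)⁻¹) / qNum q (t * q)) • E v)) :=
  e_intertwining_relation_general q t κ hq0 hq hκ E F K Ki hKi hKE hKF hEF v hKv N hnil hden
end
end
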